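/- Let Δ_t : Ω → Ω⊠Ω be the unique unital algebra map (with respect to the concatenation product ⋄) sending a ↦ a⊠a, c ↦ c⊠c, e ↦ e⊠e, and b ↦ B + tA, where B = b⊠a + c⊠b and A = b⊠c + a⊠b − b⊠a − c⊠b. Then the coassociativity identity (Δ_t ⊠ id) ∘ Δ_t (b) = (id ⊠ Δ_t) ∘ Δ_t (b) holds if and only if t ∈ {0, 1}. -/
import Mathlib


/-
STATEMENT 13: Let Δ_t : Ω → Ω⊠Ω be the unique unital ⋄-algebra map with
Δ_t(a) = a⊠a, Δ_t(c) = c⊠c, Δ_t(b) = B + tA, where B = b⊠a + c⊠b and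
A = b⊠c + a⊠b − b⊠a − c⊠b.  Then (Δ_t ⊠ id)∘Δ_t (b) = (id ⊠ Δ_t)∘Δ_t (b)
if and only if t ∈ {0, 1}.  (Since Δ_t is determined by its values on the single
letters, we record those values as δ_t : Fin 3 → pairs, with 0 = a, 1 = b, 2 = c,
and the identity is computed in the span of the letter triples; the Koszul signs of
Δ_t ⊠ id and id ⊠ Δ_t are trivial because both maps have degree 0.)
-/

noncomputable section

abbrev T2 : Type := (Fin 3 × Fin 3) →₀ ℝ
abbrev T3 : Type := (Fin 3 × Fin 3 × Fin 3) →₀ ℝ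

def Bp : T2 := Finsupp.single (1, 0) 1 + Finsupp.single (2, 1) 1
def Ap : T2 := Finsupp.single (1, 2) 1 + Finsupp.single (0, 1) 1
  - Finsupp.single (1, 0) 1 - Finsupp.single (2, 1) 1

/-- the values of Δ_t on the single letters. -/
def δt (t : ℝ) : Fin 3 → T2 :=
  fun i => if i = 1 then Bp + t • Ap else Finsupp.single (i, i) 1

/-- (Δ_t ⊠ id) on the span of letter pairs. -/
def applyL (t : ℝ) (f : T2) : T3 :=
  f.sum fun p r => r • ((δt t p.1).sum fun q s => Finsupp.single (q.1, q.2, p.2) s)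

/-- (id ⊠ Δ_t) on the span of letter pairs. -/
def applyR (t : ℝ) (f : T2) : T3 :=
  f.sum fun p r => r • ((δt t p.2).sum fun q s => Finsupp.single (p.1, q.1, q.2) s)

lemma hδ (t : ℝ) : δt t 1 = Finsupp.single (1,0) (1-t) + Finsupp.single (2,1) (1-t)
    + Finsupp.single (1,2) t + Finsupp.single (0,1) t := by
  ext p
  obtain ⟨i, j⟩ := p
  fin_cases i <;> fin_cases j <;>
    simp [δt, Bp, Ap, Finsupp.single_apply] <;> ring

lemma sum_expand {M : Type*} [AddCommMonoid M] (g : (Fin 3 × Fin 3) → ℝ → M)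
    (h0 : ∀ p, g p 0 = 0) (hadd : ∀ p b₁ b₂, g p (b₁+b₂) = g p b₁ + g p b₂)
    (c1 c2 c3 c4 : ℝ) :
    (Finsupp.single (1,0) c1 + Finsupp.single (2,1) c2 + Finsupp.single (1,2) c3
      + Finsupp.single (0,1) c4 : T2).sum g
      = g (1,0) c1 + g (2,1) c2 + g (1,2) c3 + g (0,1) c4 := by
  rw [Finsupp.sum_add_index' h0 hadd, Finsupp.sum_add_index' h0 hadd,
    Finsupp.sum_add_index' h0 hadd, Finsupp.sum_single_index (h0 _),
    Finsupp.sum_single_index (h0 _), Finsupp.sum_single_index (h0 _),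
    Finsupp.sum_single_index (h0 _)]


lemma sum_expand_smul (F : (Fin 3 × Fin 3) → T3) (c1 c2 c3 c4 : ℝ) :
    (Finsupp.single (1,0) c1 + Finsupp.single (2,1) c2 + Finsupp.single (1,2) c3
      + Finsupp.single (0,1) c4 : T2).sum (fun p r => r • F p)
      = c1 • F (1,0) + c2 • F (2,1) + c3 • F (1,2) + c4 • F (0,1) :=
  sum_expand (fun p r => r • F p) (fun p => zero_smul _ _) (fun p b₁ b₂ => add_smul _ _ _) c1 c2 c3 c4

lemma sum_expand_single (h : (Fin 3 × Fin 3) → Fin 3 × Fin 3 × Fin 3) (c1 c2 c3 c4 : ℝ) :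
    (Finsupp.single (1,0) c1 + Finsupp.single (2,1) c2 + Finsupp.single (1,2) c3
      + Finsupp.single (0,1) c4 : T2).sum (fun q s => (Finsupp.single (h q) s : T3))
      = Finsupp.single (h (1,0)) c1 + Finsupp.single (h (2,1)) c2
        + Finsupp.single (h (1,2)) c3 + Finsupp.single (h (0,1)) c4 :=
  sum_expand _ (fun p => Finsupp.single_zero _) (fun p b₁ b₂ => Finsupp.single_add _ _ _) c1 c2 c3 c4

lemma hL (t : ℝ) : applyL t (δt t 1) =
    (1-t) • (Finsupp.single ((1:Fin 3),(0:Fin 3),(0:Fin 3)) (1-t) + Finsupp.single (2,1,0) (1-t)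
      + Finsupp.single (1,2,0) t + Finsupp.single (0,1,0) t)
    + (1-t) • (Finsupp.single (2,2,1) (1:ℝ))
    + t • (Finsupp.single (1,0,2) (1-t) + Finsupp.single (2,1,2) (1-t)
      + Finsupp.single (1,2,2) t + Finsupp.single (0,1,2) t)
    + t • (Finsupp.single (0,0,1) (1:ℝ)) := by
  rw [applyL]
  rw [show δt t 1 = _ from hδ t]
  rw [sum_expand_smul]
  congr 1
  · congr 1
    · congr 1
      · -- p = (1,0)
        rw [show δt t (1,0).1 = _ from hδ t,
          sum_expand_single (fun q => (q.1, q.2, _))]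
      · -- p = (2,1)
        simp [δt]
    · -- p = (1,2)
      rw [show δt t (1,2).1 = _ from hδ t,
        sum_expand_single (fun q => (q.1, q.2, _))]
  · -- p = (0,1)
    simp [δt]

lemma hR (t : ℝ) : applyR t (δt t 1) =
    (1-t) • (Finsupp.single ((1:Fin 3),(0:Fin 3),(0:Fin 3)) (1:ℝ))
    + (1-t) • (Finsupp.single (2,1,0) (1-t) + Finsupp.single (2,2,1) (1-t)
      + Finsupp.single (2,1,2) t + Finsupp.single (2,0,1) t)
    + t • (Finsupp.single (1,2,2) (1:ℝ))
    + t • (Finsupp.single (0,1,0) (1-t) + Finsupp.single (0,2,1) (1-t)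
      + Finsupp.single (0,1,2) t + Finsupp.single (0,0,1) t) := by
  rw [applyR]
  rw [show δt t 1 = _ from hδ t]
  rw [sum_expand_smul]
  congr 1
  · congr 1
    · congr 1
      · simp [δt]
      · rw [show δt t (2,1).2 = _ from hδ t,
          sum_expand_single (fun q => (_, q.1, q.2))]
    · simp [δt]
  · rw [show δt t (0,1).2 = _ from hδ t,
      sum_expand_single (fun q => (_, q.1, q.2))]

theorem stmt13 (t : ℝ) :
    applyL t (δt t 1) = applyR t (δt t 1) ↔ (t = 0 ∨ t = 1) := by
  rw [hL, hR]
  constructor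
  · intro h
    have h1 := DFunLike.congr_fun h (0,0,1)
    simp [Finsupp.single_apply] at h1
    have h2 : t * (1 - t) = 0 := by nlinarith [h1]
    rcases mul_eq_zero.mp h2 with h3 | h3
    · exact Or.inl h3
    · exact Or.inr (by linarith)
  · rintro (rfl | rfl) <;>
      simp [smul_add, Finsupp.smul_single, smul_eq_mul] <;> abel
end
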